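/- arXiv:0711.2964 — 5 statements merged into one kernel-verified Lean document; each statement's English description precedes it below -/
import Mathlib

section
/- Let three independent bits C, B, A have biases ε_C, ε_B, ε_A (i.e., each bit equals 0 with probability (1+ε)/2). Applying the permutation of {0,1}³ that exchanges states 100 and 011 and fixes all other states yields a distribution in which the marginal bias of the first bit C equals (ε_C + ε_B + ε_A − ε_C·ε_B·ε_A)/2. -/
/-- `false` encodes the bit value `0`; states are listed as `(c, b, a)`. -/
theorem threeBitCompression_bias_general (εC εB εA : ℝ)
    (p q : Bool → Bool → Bool → ℝ)
    (hp : ∀ c b a, p c b a =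
      (if c then (1 - εC) / 2 else (1 + εC) / 2) *
      (if b then (1 - εB) / 2 else (1 + εB) / 2) *
      (if a then (1 - εA) / 2 else (1 + εA) / 2))
    (hq : ∀ c b a, q c b a =
      if (c, b, a) = (true, false, false) then p false true true
      else if (c, b, a) = (false, true, true) then p true false false
      else p c b a) :
    (q false false false + q false false true +
     q false true false + q false true true) -
    (q true false false + q true false true +
     q true true false + q true true true) =
      (εC + εB + εA - εC * εB * εA) / 2 := by
  simp only [hq, hp, Prod.mk.injEq, Bool.false_eq_true, Bool.true_eq_false, and_self,
    and_false, and_true, if_true, if_false]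
  ring

/-- 3-bit-compression (swap of states 100 ↔ 011, all others fixed) applied to
three independent bits `C, B, A` with biases `εC, εB, εA` gives the first bit
the marginal bias `(εC + εB + εA − εC·εB·εA)/2`.  `false` encodes `0`;
states are listed as `(c, b, a)`. -/
theorem threeBitCompression_bias (εC εB εA : ℝ)
    (hC : -1 ≤ εC ∧ εC ≤ 1) (hB : -1 ≤ εB ∧ εB ≤ 1) (hA : -1 ≤ εA ∧ εA ≤ 1)
    (p q : Bool → Bool → Bool → ℝ)
    (hp : ∀ c b a, p c b a =
      (if c then (1 - εC) / 2 else (1 + εC) / 2) *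
      (if b then (1 - εB) / 2 else (1 + εB) / 2) *
      (if a then (1 - εA) / 2 else (1 + εA) / 2))
    (hq : ∀ c b a, q c b a =
      if (c, b, a) = (true, false, false) then p false true true
      else if (c, b, a) = (false, true, true) then p true false false
      else p c b a) :
    (q false false false + q false false true +
     q false true false + q false true true) -
    (q true false false + q true false true +
     q true true false + q true true true) =
      (εC + εB + εA - εC * εB * εA) / 2 :=
  threeBitCompression_bias_general εC εB εA p q hp hq
end

section
/- If three independent bits each have the same bias ε₀, then after 3-bit-compression (exchange of 100 and 011) the bias of the first bit equals (3ε₀ − ε₀³)/2. -/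
/-! The gate moves the mass of `100` to first bit `0` and that of `011` to first bit `1`, so it
raises the bias `ε₁` of the first bit by `2 (p(100) - p(011))`. For a product distribution with
biases `ε₁, ε₂, ε₃` this increment is `(ε₂ + ε₃ - ε₁ - ε₁ε₂ε₃)/2`, giving the bias
`(ε₁ + ε₂ + ε₃ - ε₁ε₂ε₃)/2`, which is `(3ε₀ - ε₀³)/2` when all biases equal `ε₀`. -/

noncomputable def bitProb (ε : ℝ) (b : Bool) : ℝ :=
  if b then (1 - ε) / 2 else (1 + ε) / 2

def firstBitBias (p : Bool → Bool → Bool → ℝ) : ℝ :=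
  (p false false false + p false false true + p false true false + p false true true) -
    (p true false false + p true false true + p true true false + p true true true)

lemma firstBitBias_of_swap {p q : Bool → Bool → Bool → ℝ}
    (hq : ∀ c b a, q c b a =
      if (c, b, a) = (true, false, false) then p false true true
      else if (c, b, a) = (false, true, true) then p true false false
      else p c b a) :
    firstBitBias q = firstBitBias p + 2 * (p true false false - p false true true) := by
  simp only [firstBitBias, hq]
  norm_num
  ring

lemma firstBitBias_of_product {ε₁ ε₂ ε₃ : ℝ} {p : Bool → Bool → Bool → ℝ}
    (hp : ∀ c b a, p c b a = bitProb ε₁ c * bitProb ε₂ b * bitProb ε₃ a) :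
    firstBitBias p = ε₁ := by
  simp only [firstBitBias, hp, bitProb]
  norm_num
  ring

lemma firstBitBias_of_swap_of_product {ε₁ ε₂ ε₃ : ℝ} {p q : Bool → Bool → Bool → ℝ}
    (hp : ∀ c b a, p c b a = bitProb ε₁ c * bitProb ε₂ b * bitProb ε₃ a)
    (hq : ∀ c b a, q c b a =
      if (c, b, a) = (true, false, false) then p false true true
      else if (c, b, a) = (false, true, true) then p true false false
      else p c b a) :
    firstBitBias q = (ε₁ + ε₂ + ε₃ - ε₁ * ε₂ * ε₃) / 2 := by
  rw [firstBitBias_of_swap hq, firstBitBias_of_product hp, hp, hp]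
  simp only [bitProb, if_true, Bool.false_eq_true, if_false]
  ring

theorem threeBitCompression_equal_biases_general (ε₀ : ℝ)
    (p q : Bool → Bool → Bool → ℝ)
    (hp : ∀ c b a, p c b a =
      (if c then (1 - ε₀) / 2 else (1 + ε₀) / 2) *
      (if b then (1 - ε₀) / 2 else (1 + ε₀) / 2) *
      (if a then (1 - ε₀) / 2 else (1 + ε₀) / 2))
    (hq : ∀ c b a, q c b a =
      if (c, b, a) = (true, false, false) then p false true true
      else if (c, b, a) = (false, true, true) then p true false false
      else p c b a) :
    (q false false false + q false false true +
     q false true false + q false true true) -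
    (q true false false + q true false true +
     q true true false + q true true true) =
      (3 * ε₀ - ε₀ ^ 3) / 2 := by
  show firstBitBias q = _
  rw [firstBitBias_of_swap_of_product hp hq]
  ring

/-- If three independent bits each have bias `ε₀`, then after
3-bit-compression (swap of 100 ↔ 011) the first bit has bias
`(3ε₀ − ε₀³)/2`. -/
theorem threeBitCompression_equal_biases (ε₀ : ℝ)
    (hε : -1 ≤ ε₀ ∧ ε₀ ≤ 1)
    (p q : Bool → Bool → Bool → ℝ)
    (hp : ∀ c b a, p c b a =
      (if c then (1 - ε₀) / 2 else (1 + ε₀) / 2) *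
      (if b then (1 - ε₀) / 2 else (1 + ε₀) / 2) *
      (if a then (1 - ε₀) / 2 else (1 + ε₀) / 2))
    (hq : ∀ c b a, q c b a =
      if (c, b, a) = (true, false, false) then p false true true
      else if (c, b, a) = (false, true, true) then p true false false
      else p c b a) :
    (q false false false + q false false true +
     q false true false + q false true true) -
    (q true false false + q true false true +
     q true true false + q true true true) =
      (3 * ε₀ - ε₀ ^ 3) / 2 :=
  threeBitCompression_equal_biases_general ε₀ p q hp hq
end

section
/- Let four independent bits D, C, B, A have small biases ε_D, ε_C, ε_B, ε_A. The permutation of {0,1}⁴ exchanging 1000 ↔ 0111 and fixing all other states changes the bias of D to ε_D + 2(p_{1000} − p_{0111}), where p_{1000} = (1−ε_D)(1+ε_C)(1+ε_B)(1+ε_A)/16 and p_{0111} = (1+ε_D)(1−ε_C)(1−ε_B)(1−ε_A)/16; to first order in the biases this equals (3ε_D + ε_C + ε_B + ε_A)/4. -/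
theorem bias_swap_eq_add (p q : Bool → Bool → Bool → Bool → ℝ)
    (hq : ∀ d c b a, q d c b a =
      if (d, c, b, a) = (true, false, false, false) then p false true true true
      else if (d, c, b, a) = (false, true, true, true) then p true false false false
      else p d c b a) :
    (∑ c : Bool, ∑ b : Bool, ∑ a : Bool, (q false c b a - q true c b a)) =
      (∑ c : Bool, ∑ b : Bool, ∑ a : Bool, (p false c b a - p true c b a)) +
        2 * (p true false false false - p false true true true) := by
  simp only [Fintype.sum_bool, hq, Prod.mk.injEq, Bool.false_eq_true, Bool.true_eq_false,
    and_self, and_false, and_true, ↓reduceIte]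
  ring

theorem bias_of_product (εD εC εB εA : ℝ) (p : Bool → Bool → Bool → Bool → ℝ)
    (hp : ∀ d c b a, p d c b a =
      (if d then (1 - εD) / 2 else (1 + εD) / 2) *
      (if c then (1 - εC) / 2 else (1 + εC) / 2) *
      (if b then (1 - εB) / 2 else (1 + εB) / 2) *
      (if a then (1 - εA) / 2 else (1 + εA) / 2)) :
    (∑ c : Bool, ∑ b : Bool, ∑ a : Bool, (p false c b a - p true c b a)) = εD := by
  simp only [Fintype.sum_bool, hp, Bool.false_eq_true, ↓reduceIte]
  ring

/-- 4-bit-compression (swap 1000 ↔ 0111, all other states fixed) on four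
independent bits `D, C, B, A` with biases `εD, εC, εB, εA` changes the bias
of `D` to `εD + 2(p₁₀₀₀ − p₀₁₁₁)`, where
`p₁₀₀₀ = (1−εD)(1+εC)(1+εB)(1+εA)/16` is the probability of state 1000
before the gate (sic: the state with D = 1) and
`p₀₁₁₁ = (1+εD)(1−εC)(1−εB)(1−εA)/16`; to first order in the biases this is
`(3εD + εC + εB + εA)/4`, the correction being of third order. -/
theorem fourBitCompression_bias (εD εC εB εA : ℝ)
    (p q : Bool → Bool → Bool → Bool → ℝ)
    (hp : ∀ d c b a, p d c b a =
      (if d then (1 - εD) / 2 else (1 + εD) / 2) *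
      (if c then (1 - εC) / 2 else (1 + εC) / 2) *
      (if b then (1 - εB) / 2 else (1 + εB) / 2) *
      (if a then (1 - εA) / 2 else (1 + εA) / 2))
    (hq : ∀ d c b a, q d c b a =
      if (d, c, b, a) = (true, false, false, false) then p false true true true
      else if (d, c, b, a) = (false, true, true, true) then p true false false false
      else p d c b a) :
    (∑ c : Bool, ∑ b : Bool, ∑ a : Bool,
        (q false c b a - q true c b a)) =
      εD + 2 * ((1 - εD) * (1 + εC) * (1 + εB) * (1 + εA) / 16 -
                (1 + εD) * (1 - εC) * (1 - εB) * (1 - εA) / 16) ∧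
    εD + 2 * ((1 - εD) * (1 + εC) * (1 + εB) * (1 + εA) / 16 -
              (1 + εD) * (1 - εC) * (1 - εB) * (1 - εA) / 16) =
      (3 * εD + εC + εB + εA) / 4 +
        (εC * εB * εA - εD * (εC * εB + εC * εA + εB * εA)) / 4 := by
  refine ⟨?_, by ring⟩
  rw [bias_swap_eq_add p q hq, bias_of_product εD εC εB εA p hp, hp, hp]
  simp only [Bool.false_eq_true, ↓reduceIte]
  ring
end

section
/- Applying (k+1)-bit-compression (exchange of 10…0 ↔ 01…1 on k+1 bits) to independent bits with small biases ε_{k+1}, ε_k, …, ε_1 changes the bias of the leftmost bit, to first order, to ((2^{k-1} − 1)·ε_{k+1} + Σ_{j=1}^{k} ε_j)/2^{k-1}. -/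
/-!
Compression is the transposition of the two states `s₁ = 10…0` and `s₂ = 01…1`, so it changes
the bias `E[(-1)^{s_L}]` of the leftmost bit by `2 (P(s₁) - P(s₂))`; before the gate that bias
is `t ε_L` because the bits are independent. At `t = 0` both states have probability
`2^{-(k+1)}`, and differentiating the two products gives
`ε_L + 2^{-k} ((S - ε_L) - (ε_L - S)) = ((2^{k-1} - 1) ε_L + S) / 2^{k-1}` with `S = Σ_{j ≠ L} ε_j`.
-/

open Finset

theorem Fintype.sum_mul_comp_swap {α R : Type*} [Fintype α] [DecidableEq α] [CommRing R]
    (w p : α → R) (a b : α) :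
    ∑ x, w x * p (Equiv.swap a b x) = ∑ x, w x * p x + (w a - w b) * (p b - p a) := by
  rcases eq_or_ne a b with rfl | hab
  · simp
  have hdiff : ∑ x, w x * (p (Equiv.swap a b x) - p x) = (w a - w b) * (p b - p a) := by
    rw [Fintype.sum_eq_add a b hab fun x hx => by
      rw [Equiv.swap_apply_of_ne_of_ne hx.1 hx.2, sub_self, mul_zero],
      Equiv.swap_apply_left, Equiv.swap_apply_right]
    ring
  rw [← hdiff, ← sum_add_distrib]
  exact Fintype.sum_congr _ _ fun x => by ring

theorem Fintype.sum_sign_mul_prod {ι R : Type*} [Fintype ι] [DecidableEq ι] [CommRing R]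
    (f : ι → Bool → R) (hf : ∀ i, f i false + f i true = 1) (j : ι) :
    ∑ s : ι → Bool, (if s j then -1 else 1) * ∏ i, f i (s i) = f j false - f j true := by
  set σ : Bool → R := fun b => if b then -1 else 1
  have hsign : ∀ s : ι → Bool,
      σ (s j) * ∏ i, f i (s i) = ∏ i, (if i = j then σ (s i) else 1) * f i (s i) := by
    intro s
    rw [prod_mul_distrib, Fintype.prod_ite_eq']
  calc ∑ s : ι → Bool, σ (s j) * ∏ i, f i (s i)
      = ∑ s : ι → Bool, ∏ i, (if i = j then σ (s i) else 1) * f i (s i) :=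
        Fintype.sum_congr _ _ hsign
    _ = ∏ i, ∑ b, (if i = j then σ b else 1) * f i b :=
        (Fintype.prod_sum fun i b => (if i = j then σ b else 1) * f i b).symm
    _ = ∑ b, σ b * f j b := by
        rw [Fintype.prod_eq_single j fun i hi => by simp [hi, hf i, add_comm]]
        simp only [if_true]
    _ = f j false - f j true := by simp [σ]; ring

theorem Fintype.sum_ite_eq_add_sum_erase {ι M : Type*} [Fintype ι] [DecidableEq ι]
    [AddCommMonoid M] (j : ι) (a : M) (f : ι → M) :
    ∑ i, (if i = j then a else f i) = a + ∑ i ∈ univ.erase j, f i := by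
  rw [← add_sum_erase _ _ (mem_univ j), if_pos rfl]
  exact congrArg _ (Finset.sum_congr rfl fun i hi => if_neg (ne_of_mem_erase hi))

theorem hasDerivAt_prod_one_add_mul {ι : Type*} (u : Finset ι) (a : ι → ℝ) :
    HasDerivAt (fun t => ∏ i ∈ u, (1 + t * a i)) (∑ i ∈ u, a i) 0 := by
  classical
  simpa using HasDerivAt.fun_finsetProd (u := u) (x := 0)
    fun i _ => (hasDerivAt_mul_const (a i)).const_add 1

section BiasedBits

variable {ι : Type*} [Fintype ι]

/-- Bit `i` is `1` (`s i = true`) with probability `(1 - t * ε i) / 2`, so it has bias `t * ε i`. -/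
noncomputable def biasedProb (ε : ι → ℝ) (t : ℝ) (s : ι → Bool) : ℝ :=
  ∏ i, if s i then (1 - t * ε i) / 2 else (1 + t * ε i) / 2

theorem biasedProb_eq (ε : ι → ℝ) (t : ℝ) (s : ι → Bool) :
    biasedProb ε t s =
      (∏ i, (1 + t * if s i then -ε i else ε i)) / 2 ^ Fintype.card ι := by
  rw [biasedProb, ← Finset.card_univ, ← prod_const, ← prod_div_distrib]
  refine Fintype.prod_congr _ _ fun i => ?_
  split_ifs <;> ring

theorem biasedProb_zero (ε : ι → ℝ) (s : ι → Bool) :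
    biasedProb ε 0 s = 1 / 2 ^ Fintype.card ι := by
  simp [biasedProb_eq]

theorem hasDerivAt_biasedProb (ε : ι → ℝ) (s : ι → Bool) :
    HasDerivAt (biasedProb ε · s)
      ((∑ i, if s i then -ε i else ε i) / 2 ^ Fintype.card ι) 0 := by
  simp_rw [biasedProb_eq]
  exact (hasDerivAt_prod_one_add_mul _ _).div_const _

theorem sum_sign_mul_biasedProb [DecidableEq ι] (ε : ι → ℝ) (t : ℝ) (j : ι) :
    ∑ s : ι → Bool, (if s j then -1 else 1) * biasedProb ε t s = t * ε j := by
  refine (Fintype.sum_sign_mul_prod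
    (fun i b => if b then (1 - t * ε i) / 2 else (1 + t * ε i) / 2) (fun i => ?_) j).trans ?_ <;>
  simp only [Bool.false_eq_true, if_false, if_true] <;> ring

end BiasedBits

/-- (k+1)-bit-compression (swap of 10…0 ↔ 01…1, all other states fixed) on
`k+1` independent bits with small biases changes the bias of the leftmost
bit, to first order, to `((2^{k-1} − 1)·ε_{k+1} + Σ_{j=1}^{k} ε_j)/2^{k-1}`.
"To first order" is formalized by scaling all biases by `t` and taking the
derivative of the resulting leftmost bias at `t = 0`; the leftmost bit is
index `Fin.last k`, and `g t` is its bias after the gate. -/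
theorem kBonacci_compression_first_order (k : ℕ) (hk : 1 ≤ k)
    (ε : Fin (k + 1) → ℝ)
    (p : ℝ → (Fin (k + 1) → Bool) → ℝ)
    (hp : ∀ t s, p t s =
      ∏ i : Fin (k + 1),
        (if s i then (1 - t * ε i) / 2 else (1 + t * ε i) / 2))
    (q : ℝ → (Fin (k + 1) → Bool) → ℝ)
    (hq : ∀ t s, q t s =
      if s = (fun i => decide (i = Fin.last k)) then
        p t (fun i => decide (i ≠ Fin.last k))
      else if s = (fun i => decide (i ≠ Fin.last k)) then
        p t (fun i => decide (i = Fin.last k))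
      else p t s)
    (g : ℝ → ℝ)
    (hg : ∀ t, g t =
      ∑ s : Fin (k + 1) → Bool,
        (if s (Fin.last k) then (-1 : ℝ) else 1) * q t s) :
    g 0 = 0 ∧
    HasDerivAt g
      ((((2 : ℝ) ^ (k - 1) - 1) * ε (Fin.last k) +
        ∑ j ∈ Finset.univ.erase (Fin.last k), ε j) / 2 ^ (k - 1)) 0 := by
  set L := Fin.last k
  set s₁ : Fin (k + 1) → Bool := fun i => decide (i = L)
  set s₂ : Fin (k + 1) → Bool := fun i => decide (i ≠ L)
  set S := ∑ j ∈ Finset.univ.erase L, ε j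
  obtain rfl : p = biasedProb ε := funext fun t => funext (hp t)
  have hq : ∀ t, q t = fun s => biasedProb ε t (Equiv.swap s₁ s₂ s) := by
    intro t
    ext s
    rw [hq, Equiv.swap_apply_def]
    split_ifs <;> rfl
  have hg : g = fun t => t * ε L + 2 * (biasedProb ε t s₁ - biasedProb ε t s₂) := by
    ext t
    rw [hg, hq, Fintype.sum_mul_comp_swap, sum_sign_mul_biasedProb]
    simp only [s₁, s₂, decide_true, ↓reduceIte, ne_eq, decide_not, Bool.not_true,
      Bool.false_eq_true, add_right_inj]
    ring
  have hsum₁ : ∑ i, (if s₁ i then -ε i else ε i) = -ε L + S := by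
    rw [← Fintype.sum_ite_eq_add_sum_erase]
    refine Fintype.sum_congr _ _ fun i => ?_
    by_cases h : i = L <;> simp [s₁, h]
  have hsum₂ : ∑ i, (if s₂ i then -ε i else ε i) = ε L - S := by
    rw [sub_eq_add_neg, ← Finset.sum_neg_distrib, ← Fintype.sum_ite_eq_add_sum_erase]
    refine Fintype.sum_congr _ _ fun i => ?_
    by_cases h : i = L <;> simp [s₂, h]
  refine ⟨by simp [hg, biasedProb_zero], ?_⟩
  have hderiv := ((hasDerivAt_id (0 : ℝ)).mul_const (ε L)).add
    (((hasDerivAt_biasedProb ε s₁).sub (hasDerivAt_biasedProb ε s₂)).const_mul 2)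
  rw [hg]
  refine hderiv.congr_deriv ?_
  rw [hsum₁, hsum₂, Fintype.card_fin, ← Nat.sub_add_cancel hk]
  simp only [Nat.add_sub_cancel]
  field_simp
  ring
end

section
/- For each n ≥ 2, the vector v ∈ ℝ^{2^n} whose entry at index with binary expansion b = (b_{n-1},…,b_0) is v_b = Σ_{j=1}^{n-1} 2^{j-1}(1 − 2b_j) + (1 − 2b_0) (i.e., the S&S diagonal of the product state with biases 2^{n-2}ε₀,…,2ε₀,ε₀,ε₀) is invariant under the reset map R and is sorted in nonincreasing order when entries are listed by decreasing value of the signed sum; hence it is a fixed point of the PPA at leading order. -/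
/-!
Since `2^j (1 - 2 b_j)` summed over the binary digits of `m < 2^k` is `2^k - 1 - 2m`, peeling off
the digit `b_0` (weight `1`) and halving the remaining weights shows that the entry at index `m`
is `2^(n-1) - 2 ⌈m/2⌉`. This is nonincreasing in `m`, and the pair at indices `2i, 2i+1` is
`c + 1, c - 1` with `c = 2^(n-1) - 2i - 1` its mean, which is exactly what the reset map produces.
-/

open Finset

theorem Nat.ite_testBit_zero_eq_mod_two {R : Type*} [Semiring R] (m : ℕ) :
    (if m.testBit 0 then (1 : R) else 0) = (m % 2 : ℕ) := by
  rcases Nat.mod_two_eq_zero_or_one m with h | h <;> simp [Nat.testBit_zero, h]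

theorem Nat.sum_range_two_pow_mul_one_sub_two_testBit {R : Type*} [CommRing R] {k m : ℕ}
    (hm : m < 2 ^ k) :
    ∑ j ∈ range k, (2 : R) ^ j * (1 - 2 * (if m.testBit j then 1 else 0)) = 2 ^ k - 1 - 2 * m := by
  induction k generalizing m with
  | zero => simp [Nat.lt_one_iff.mp hm]
  | succ k ih =>
    have hhalf : m / 2 < 2 ^ k := by rw [pow_succ] at hm; omega
    have hhigh : ∑ j ∈ range k, (2 : R) ^ (j + 1) * (1 - 2 * (if m.testBit (j + 1) then 1 else 0))
        = 2 * (2 ^ k - 1 - 2 * (m / 2 : ℕ)) := by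
      simp only [Nat.testBit_succ, ← ih hhalf, mul_sum, pow_succ]
      exact sum_congr rfl fun j _ => by ring
    rw [sum_range_succ', hhigh, Nat.ite_testBit_zero_eq_mod_two]
    have hdecomp : (m : R) = 2 * (m / 2 : ℕ) + (m % 2 : ℕ) := by
      rw [← Nat.cast_ofNat, ← Nat.cast_mul, ← Nat.cast_add, Nat.div_add_mod]
    rw [hdecomp]
    ring

theorem allBonacci_signedSum_eq {R : Type*} [CommRing R] {k m : ℕ} (hm : m < 2 ^ (k + 1)) :
    ∑ j ∈ range (k + 1), (if j = 0 then (1 : R) else 2 ^ (j - 1)) *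
        (1 - 2 * (if m.testBit j then (1 : R) else 0)) =
      2 ^ k - 2 * ((m + 1) / 2 : ℕ) := by
  have hhalf : m / 2 < 2 ^ k := by rw [pow_succ] at hm; omega
  have hceil : (m + 1) / 2 = m / 2 + m % 2 := by omega
  simp only [sum_range_succ', Nat.add_one_ne_zero, if_false, if_true, Nat.add_sub_cancel,
    Nat.testBit_succ, Nat.sum_range_two_pow_mul_one_sub_two_testBit hhalf, one_mul,
    Nat.ite_testBit_zero_eq_mod_two, hceil]
  push_cast
  ring

/-- For `n ≥ 2`, the S&S diagonal of the product state with biases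
`2^{n-2}ε₀, …, 2ε₀, ε₀, ε₀` — the vector `v` whose entry at index `m < 2^n`
with binary digits `b_j = m.testBit j` is
`Σ_{j=1}^{n-1} 2^{j-1}(1 − 2b_j) + (1 − 2b_0)` — is invariant under the
reset map `R` (each consecutive pair replaced by average ± 1) and is
nonincreasing in the index `m`; hence it is a fixed point of the PPA at
leading order. -/
theorem allBonacci_diagonal_PPA_fixed_point (n : ℕ) (hn : 2 ≤ n)
    (v : ℕ → ℝ)
    (hv : ∀ m : ℕ, v m =
      ∑ j ∈ Finset.range n,
        (if j = 0 then (1 : ℝ) else 2 ^ (j - 1)) *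
          (1 - 2 * (if m.testBit j then (1 : ℝ) else 0))) :
    (∀ m m' : ℕ, m ≤ m' → m' < 2 ^ n → v m' ≤ v m) ∧
    (∀ i : ℕ, 2 * i + 1 < 2 ^ n →
      v (2 * i) = (v (2 * i) + v (2 * i + 1)) / 2 + 1 ∧
      v (2 * i + 1) = (v (2 * i) + v (2 * i + 1)) / 2 - 1) := by
  obtain ⟨k, rfl⟩ : ∃ k, n = k + 1 := ⟨n - 1, by omega⟩
  have hv_closed : ∀ m < 2 ^ (k + 1), v m = 2 ^ k - 2 * ((m + 1) / 2 : ℕ) := fun m hm =>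
    (hv m).trans (allBonacci_signedSum_eq hm)
  refine ⟨fun m m' hle hm' => ?_, fun i hi => ?_⟩
  · rw [hv_closed m (hle.trans_lt hm'), hv_closed m' hm']
    have hceil_mono : (m + 1) / 2 ≤ (m' + 1) / 2 := Nat.div_le_div_right (by omega)
    gcongr
  · rw [hv_closed (2 * i) (by omega), hv_closed (2 * i + 1) hi,
      show (2 * i + 1) / 2 = i by omega, show (2 * i + 1 + 1) / 2 = i + 1 by omega]
    push_cast
    constructor <;> ring
end
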